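/- For every natural number n ≥ 4 and every k ∈ {0, 1, 2}, there exists an ((n − k) × n, n)-near triple array and an ((n − k) × (n − 1), n)-near triple array. -/

import Mathlib

open Finset

/-- An `r × c` row-column design on `v` symbols is binary if no symbol occurs
twice in any row or in any column. -/
def IsBinaryDesign {r c v : ℕ} (T : Fin r × Fin c → Fin v) : Prop :=
  (∀ (i : Fin r) (j j' : Fin c), j ≠ j' → T (i, j) ≠ T (i, j')) ∧
  (∀ (j : Fin c) (i i' : Fin r), i ≠ i' → T (i, j) ≠ T (i', j))

/-- The replication number of a symbol `s`: the number of cells containing `s`. -/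
def replNum {r c v : ℕ} (T : Fin r × Fin c → Fin v) (s : Fin v) : ℕ :=
  (Finset.univ.filter (fun p : Fin r × Fin c => T p = s)).card

/-- The average replication number `e = rc/v` as a rational number. -/
def avgRepl (r c v : ℕ) : ℚ := ((r : ℚ) * (c : ℚ)) / (v : ℚ)

/-- A design is equireplicate if `e = rc/v` is an integer and every symbol has
replication number `e`. -/
def IsEquireplicate {r c v : ℕ} (T : Fin r × Fin c → Fin v) : Prop :=
  (avgRepl r c v).den = 1 ∧ ∀ s : Fin v, (replNum T s : ℚ) = avgRepl r c v

/-- A design is near equireplicate if `e = rc/v` is not an integer and every symbol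
has replication number `⌊e⌋` or `⌈e⌉`. -/
def IsNearEquireplicate {r c v : ℕ} (T : Fin r × Fin c → Fin v) : Prop :=
  (avgRepl r c v).den ≠ 1 ∧
  ∀ s : Fin v, (replNum T s : ℤ) = ⌊avgRepl r c v⌋ ∨ (replNum T s : ℤ) = ⌈avgRepl r c v⌉

/-- The set of symbols occurring in row `i`. -/
def rowSet {r c v : ℕ} (T : Fin r × Fin c → Fin v) (i : Fin r) : Finset (Fin v) :=
  Finset.univ.image (fun j : Fin c => T (i, j))

/-- The set of symbols occurring in column `j`. -/
def colSet {r c v : ℕ} (T : Fin r × Fin c → Fin v) (j : Fin c) : Finset (Fin v) :=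
  Finset.univ.image (fun i : Fin r => T (i, j))

/-- Average row-column intersection size `λ_rc`. -/
def lamRC {r c v : ℕ} (T : Fin r × Fin c → Fin v) : ℚ :=
  (∑ i : Fin r, ∑ j : Fin c, ((rowSet T i ∩ colSet T j).card : ℚ)) / ((r : ℚ) * (c : ℚ))

/-- Average row-row intersection size `λ_rr`. -/
def lamRR {r c v : ℕ} (T : Fin r × Fin c → Fin v) : ℚ :=
  (∑ p ∈ Finset.univ.filter (fun p : Fin r × Fin r => p.1 < p.2),
      ((rowSet T p.1 ∩ rowSet T p.2).card : ℚ)) / ((r : ℚ) * ((r : ℚ) - 1) / 2)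

/-- Average column-column intersection size `λ_cc`. -/
def lamCC {r c v : ℕ} (T : Fin r × Fin c → Fin v) : ℚ :=
  (∑ p ∈ Finset.univ.filter (fun p : Fin c × Fin c => p.1 < p.2),
      ((colSet T p.1 ∩ colSet T p.2).card : ℚ)) / ((c : ℚ) * ((c : ℚ) - 1) / 2)

/-- An `(r × c, v)`-near triple array. -/
def IsNearTripleArray {r c v : ℕ} (T : Fin r × Fin c → Fin v) : Prop :=
  IsBinaryDesign T ∧ (IsEquireplicate T ∨ IsNearEquireplicate T) ∧
  (∀ (i : Fin r) (j : Fin c),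
    ((rowSet T i ∩ colSet T j).card : ℤ) = ⌊lamRC T⌋ ∨
    ((rowSet T i ∩ colSet T j).card : ℤ) = ⌈lamRC T⌉) ∧
  (∀ i j : Fin r, i ≠ j →
    ((rowSet T i ∩ rowSet T j).card : ℤ) = ⌊lamRR T⌋ ∨
    ((rowSet T i ∩ rowSet T j).card : ℤ) = ⌈lamRR T⌉) ∧
  (∀ i j : Fin c, i ≠ j →
    ((colSet T i ∩ colSet T j).card : ℤ) = ⌊lamCC T⌋ ∨
    ((colSet T i ∩ colSet T j).card : ℤ) = ⌈lamCC T⌉)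

/-! Keep the first `r ≥ n - 2` rows and `c ≥ n - 1` columns of the cyclic Latin square
`(i, j) ↦ i + j` over `ℤ/n`. Every row then misses at most one symbol and every column at most
two, and `|X ∩ Y| = |X| + |Y| - n + |Xᶜ ∩ Yᶜ|` shows that each replication number and each
intersection size takes one of two consecutive values. The one case needing an argument is
two columns: their complements are distinct translates of a subset of `{n - 2, n - 1}`, and two
distinct translates of `{u, u + 1}` share at most one point once `n ≥ 3`. Finally, a quantity
taking two consecutive values is everywhere the floor or the ceiling of its average. -/

open Pointwise

section Averages

theorem eq_floor_or_eq_ceil_avg {ι : Type*} {s : Finset ι} {f : ι → ℕ} {a : ℕ}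
    (hf : ∀ y ∈ s, f y = a ∨ f y = a + 1) {x : ι} (hx : x ∈ s) :
    (f x : ℤ) = ⌊(∑ y ∈ s, (f y : ℚ)) / #s⌋ ∨ (f x : ℤ) = ⌈(∑ y ∈ s, (f y : ℚ)) / #s⌉ := by
  have hs : (0 : ℚ) < #s := by exact_mod_cast card_pos.2 ⟨x, hx⟩
  have hlo : ∀ y ∈ s, (a : ℚ) ≤ f y := fun y hy => by
    rcases hf y hy with h | h <;> simp [h]
  have hhi : ∀ y ∈ s, (f y : ℚ) ≤ a + 1 := fun y hy => by
    rcases hf y hy with h | h <;> simp [h]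
  have hconst (b : ℚ) : ∑ _y ∈ s, b = #s * b := by rw [sum_const, nsmul_eq_mul]
  rcases hf x hx with h | h
  · left
    rw [h, eq_comm, Int.floor_eq_iff, le_div_iff₀ hs, div_lt_iff₀ hs]
    push_cast
    constructor
    · simpa [hconst, mul_comm] using sum_le_sum hlo
    · have := sum_lt_sum hhi ⟨x, hx, by simp [h]⟩
      rwa [hconst, mul_comm] at this
  · right
    rw [h, eq_comm, Int.ceil_eq_iff, lt_div_iff₀ hs, div_le_iff₀ hs]
    push_cast [add_sub_cancel_right]
    constructor
    · have := sum_lt_sum hlo ⟨x, hx, by simp [h]⟩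
      rwa [hconst, mul_comm] at this
    · simpa [hconst, mul_comm] using sum_le_sum hhi

theorem Rat.eq_of_den_eq_one_of_eq_floor_or_eq_ceil {q : ℚ} {z : ℤ} (hq : q.den = 1)
    (hz : z = ⌊q⌋ ∨ z = ⌈q⌉) : (z : ℚ) = q := by
  rw [← Rat.coe_int_num_of_den_eq_one hq] at hz ⊢
  simpa using hz

theorem eq_floor_or_eq_ceil_pairAvg {m a : ℕ} {g : Fin m → Fin m → ℕ}
    (hsymm : ∀ i j, g i j = g j i) (hg : ∀ i j, i ≠ j → g i j = a ∨ g i j = a + 1)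
    {i j : Fin m} (hij : i ≠ j) :
    (g i j : ℤ) = ⌊(∑ p ∈ univ.filter (fun p : Fin m × Fin m => p.1 < p.2), (g p.1 p.2 : ℚ)) /
        ((m : ℚ) * ((m : ℚ) - 1) / 2)⌋ ∨
      (g i j : ℤ) = ⌈(∑ p ∈ univ.filter (fun p : Fin m × Fin m => p.1 < p.2), (g p.1 p.2 : ℚ)) /
        ((m : ℚ) * ((m : ℚ) - 1) / 2)⌉ := by
  wlog hlt : i < j generalizing i j
  · rw [hsymm]
    exact this hij.symm (hij.lt_or_gt.resolve_left hlt)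
  have hcard : ((m : ℚ) * ((m : ℚ) - 1) / 2) =
      #(univ.filter (fun p : Fin m × Fin m => p.1 < p.2)) := by
    rw [Fintype.card_product_filter_lt, Fintype.card_fin, Nat.cast_choose_two]
  rw [hcard]
  exact eq_floor_or_eq_ceil_avg (s := univ.filter fun p : Fin m × Fin m => p.1 < p.2)
    (f := fun p => g p.1 p.2) (x := (i, j))
    (fun p hp => hg p.1 p.2 (mem_filter.1 hp).2.ne) (mem_filter.2 ⟨mem_univ _, hlt⟩)

end Averages

section Designs

variable {r c v : ℕ}

theorem sum_replNum (T : Fin r × Fin c → Fin v) : ∑ s, replNum T s = r * c := by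
  have := card_eq_sum_card_fiberwise (s := univ) (t := univ) fun p _ => mem_univ (T p)
  simpa [replNum] using this.symm

theorem isNearTripleArray_of_two_valued {T : Fin r × Fin c → Fin v} (hT : IsBinaryDesign T)
    {e a b d : ℕ} (hrepl : ∀ s, replNum T s = e ∨ replNum T s = e + 1)
    (hrc : ∀ i j, #(rowSet T i ∩ colSet T j) = a ∨ #(rowSet T i ∩ colSet T j) = a + 1)
    (hrr : ∀ i i', i ≠ i' →
      #(rowSet T i ∩ rowSet T i') = b ∨ #(rowSet T i ∩ rowSet T i') = b + 1)
    (hcc : ∀ j j', j ≠ j' →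
      #(colSet T j ∩ colSet T j') = d ∨ #(colSet T j ∩ colSet T j') = d + 1) :
    IsNearTripleArray T := by
  have havg : avgRepl r c v = (∑ s, (replNum T s : ℚ)) / #(univ : Finset (Fin v)) := by
    rw [avgRepl, ← Nat.cast_sum, sum_replNum, card_univ, Fintype.card_fin]
    push_cast
    rfl
  have hrepl' (s : Fin v) := havg ▸ eq_floor_or_eq_ceil_avg (fun s _ => hrepl s) (mem_univ s)
  have hlamRC : lamRC T = (∑ p : Fin r × Fin c, (#(rowSet T p.1 ∩ colSet T p.2) : ℚ)) /
      #(univ : Finset (Fin r × Fin c)) := by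
    rw [lamRC, ← Fintype.sum_prod_type', card_univ, Fintype.card_prod, Fintype.card_fin,
      Fintype.card_fin]
    push_cast
    rfl
  refine ⟨hT, ?_, fun i j => ?_, fun i i' hi => ?_, fun j j' hj => ?_⟩
  · by_cases hden : (avgRepl r c v).den = 1
    · exact .inl ⟨hden, fun s => Rat.eq_of_den_eq_one_of_eq_floor_or_eq_ceil hden (hrepl' s)⟩
    · exact .inr ⟨hden, hrepl'⟩
  · rw [hlamRC]
    exact eq_floor_or_eq_ceil_avg (fun p _ => hrc p.1 p.2) (mem_univ (i, j))
  · exact eq_floor_or_eq_ceil_pairAvg (fun _ _ => congrArg card (inter_comm _ _)) hrr hi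
  · exact eq_floor_or_eq_ceil_pairAvg (fun _ _ => congrArg card (inter_comm _ _)) hcc hj

end Designs

section Intersections

theorem card_inter_eq_or_of_card_compl_inter_le_one {α : Type*} [Fintype α] [DecidableEq α]
    {X Y : Finset α} (h : #(Xᶜ ∩ Yᶜ) ≤ 1) :
    #(X ∩ Y) = #X + #Y - Fintype.card α ∨ #(X ∩ Y) = #X + #Y - Fintype.card α + 1 := by
  have hunion := card_union_add_card_inter X Y
  have hcompl := card_add_card_compl (X ∪ Y)
  rw [compl_union] at hcompl
  omega

theorem card_compl_vadd_inter_le_one {G : Type*} [AddCommGroup G] [Fintype G] [DecidableEq G]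
    {A : Finset G} {u g t t' : G} (hA : ∀ a ∉ A, a = u ∨ a = u + g) (hg : g + g ≠ 0)
    (ht : t ≠ t') : #((t +ᵥ A)ᶜ ∩ (t' +ᵥ A)ᶜ) ≤ 1 := by
  refine card_le_one.2 fun x hx y hy => ?_
  simp only [mem_inter, mem_compl, ← neg_vadd_mem_iff, vadd_eq_add] at hx hy
  -- `x - t` and `x - t'` are distinct points of `{u, u + g}`, so `t' - t = ± g`, and since
  -- `g ≠ -g` the sign determines `x - t`; the same holds for `y`.
  rcases hA _ hx.1 with h1 | h1 <;> rcases hA _ hx.2 with h2 | h2 <;>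
    rcases hA _ hy.1 with h3 | h3 <;> rcases hA _ hy.2 with h4 | h4 <;> grind

end Intersections

section CyclicArray

variable {n r c : ℕ} (hr : r ≤ n) (hc : c ≤ n)

def cyclicArray : Fin r × Fin c → Fin n :=
  fun p => Fin.castLE hr p.1 + Fin.castLE hc p.2

theorem isBinaryDesign_cyclicArray : IsBinaryDesign (cyclicArray hr hc) :=
  ⟨fun _ _ _ hj h => hj (Fin.castLE_injective hc (add_left_cancel h)),
    fun _ _ _ hi h => hi (Fin.castLE_injective hr (add_right_cancel h))⟩

theorem rowSet_cyclicArray (i : Fin r) :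
    rowSet (cyclicArray hr hc) i = Fin.castLE hr i +ᵥ univ.map (Fin.castLEEmb hc) := by
  ext x
  simp [rowSet, cyclicArray, mem_vadd_finset]

theorem colSet_cyclicArray (j : Fin c) :
    colSet (cyclicArray hr hc) j = Fin.castLE hc j +ᵥ univ.map (Fin.castLEEmb hr) := by
  ext x
  simp [colSet, cyclicArray, mem_vadd_finset, add_comm]

theorem replNum_cyclicArray [NeZero n] (s : Fin n) :
    replNum (cyclicArray hr hc) s =
      #((univ.map (Fin.castLEEmb hc)).image (s - ·) ∩ univ.map (Fin.castLEEmb hr)) := by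
  refine card_nbij (fun p => Fin.castLE hr p.1) ?_ ?_ ?_
  · intro p hp
    have hp : Fin.castLE hr p.1 + Fin.castLE hc p.2 = s := (mem_filter.1 hp).2
    simp only [coe_inter, coe_map, coe_image, coe_univ, Set.image_univ]
    exact ⟨⟨_, ⟨p.2, rfl⟩, sub_eq_of_eq_add hp.symm⟩, ⟨p.1, rfl⟩⟩
  · intro p hp q hq h
    have hp : Fin.castLE hr p.1 + Fin.castLE hc p.2 = s := (mem_filter.1 hp).2
    have hq : Fin.castLE hr q.1 + Fin.castLE hc q.2 = s := (mem_filter.1 hq).2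
    have h1 : p.1 = q.1 := Fin.castLE_injective hr h
    refine Prod.ext h1 (Fin.castLE_injective hc (add_left_cancel (a := Fin.castLE hr p.1) ?_))
    rw [hp, h1, hq]
  · intro x hx
    simp only [coe_inter, coe_map, coe_image, coe_univ, Set.image_univ] at hx
    obtain ⟨⟨_, ⟨j, rfl⟩, hij⟩, ⟨i, rfl⟩⟩ := hx
    have hij : s - Fin.castLE hc j = Fin.castLE hr i := hij
    refine ⟨(i, j), mem_filter.2 ⟨mem_univ _, ?_⟩, rfl⟩
    rw [cyclicArray, ← hij, sub_add_cancel]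

theorem isNearTripleArray_cyclicArray (hn : 3 ≤ n) (hr' : n - 2 ≤ r)
    (hc' : n - 1 ≤ c) : IsNearTripleArray (cyclicArray hr hc) := by
  have : NeZero n := ⟨by omega⟩
  set A := univ.map (Fin.castLEEmb hr)
  have hA : ∀ a ∉ A, a = ⟨n - 2, by omega⟩ ∨ a = ⟨n - 2, by omega⟩ + 1 := by
    intro a ha
    have hra : r ≤ a.val := by
      by_contra h
      exact ha (mem_map.2 ⟨⟨a, by omega⟩, mem_univ _, rfl⟩)
    simp only [Fin.ext_iff, Fin.val_add, Fin.val_one', Nat.one_mod_eq_one.2 (by omega : n ≠ 1),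
      Nat.mod_eq_of_lt (by omega : n - 2 + 1 < n)]
    omega
  have htwo : (1 + 1 : Fin n) ≠ 0 := by
    simp [Fin.ext_iff, Fin.val_add, Nat.mod_eq_of_lt (by omega : 2 < n)]
  have hrow (i) : #(rowSet (cyclicArray hr hc) i) = c := by simp [rowSet_cyclicArray]
  have hcol (j) : #(colSet (cyclicArray hr hc) j) = r := by simp [colSet_cyclicArray]
  have hcompl {X : Finset (Fin n)} (hX : #X = c) (Y : Finset (Fin n)) : #(Xᶜ ∩ Yᶜ) ≤ 1 :=
    (card_le_card inter_subset_left).trans (by rw [card_compl, Fintype.card_fin, hX]; omega)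
  refine isNearTripleArray_of_two_valued (e := c + r - n) (a := c + r - n) (b := c + c - n)
    (d := r + r - n) (isBinaryDesign_cyclicArray hr hc) (fun s => ?_) (fun i j => ?_)
    (fun i i' _ => ?_) (fun j j' hj => ?_)
  · have hX : #((univ.map (Fin.castLEEmb hc)).image (s - ·)) = c := by
      simp [card_image_of_injective _ sub_right_injective]
    have hY : #A = r := by simp [A]
    simpa [replNum_cyclicArray, hX, hY] using
      card_inter_eq_or_of_card_compl_inter_le_one (hcompl hX A)
  · simpa [hrow, hcol] using card_inter_eq_or_of_card_compl_inter_le_one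
      (hcompl (hrow i) (colSet (cyclicArray hr hc) j))
  · simpa [hrow] using card_inter_eq_or_of_card_compl_inter_le_one
      (hcompl (hrow i) (rowSet (cyclicArray hr hc) i'))
  · have h : #((colSet (cyclicArray hr hc) j)ᶜ ∩ (colSet (cyclicArray hr hc) j')ᶜ) ≤ 1 := by
      rw [colSet_cyclicArray, colSet_cyclicArray]
      exact card_compl_vadd_inter_le_one hA htwo ((Fin.castLE_injective hc).ne hj)
    simpa [hcol] using card_inter_eq_or_of_card_compl_inter_le_one h

end CyclicArray

/-- For any `n ≥ 4` and `k ≤ 2` there exist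
`((n − k) × n, n)` and `((n − k) × (n − 1), n)`-near triple arrays. -/
theorem nearTripleArray_from_latin (n k : ℕ) (hn : 4 ≤ n) (hk : k ≤ 2) :
    (∃ T : Fin (n - k) × Fin n → Fin n, IsNearTripleArray T) ∧
    (∃ T : Fin (n - k) × Fin (n - 1) → Fin n, IsNearTripleArray T) := by
  have hk' : n - k ≤ n := Nat.sub_le n k
  exact ⟨⟨_, isNearTripleArray_cyclicArray hk' le_rfl (by omega) (by omega) (by omega)⟩,
    ⟨_, isNearTripleArray_cyclicArray hk' (Nat.sub_le n 1) (by omega) (by omega) le_rfl⟩⟩
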